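/- arXiv:1006.5771 — 5 statements merged into one kernel-verified Lean document; each statement's English description precedes it below -/
import Mathlib

section
/- If X is an indecomposable continuum, then T(A) = X for every nonempty subset A of X, where T(A) is the set of points x such that every subcontinuum of X \ A containing x has empty interior in X. -/
/-!
Let `K` be a proper subcontinuum of `X` with nonempty interior. If `Kᶜ` is connected, then `X` is
the union of `K` and the proper subcontinuum `closure Kᶜ = (interior K)ᶜ`. Otherwise `Kᶜ` splits
into two nonempty disjoint open pieces `P` and `Q`, and `X = Qᶜ ∪ Pᶜ`, where `Qᶜ = K ∪ P` and
`Pᶜ = K ∪ Q` are closed, connected and proper. So in an indecomposable continuum every proper subcontinuum has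
empty interior, and a subcontinuum missing a nonempty set `A` is proper.
-/

/-- Jones' set function `T`. -/
def JonesT {X : Type*} [TopologicalSpace X] (A : Set X) : Set X :=
  {x | ∀ K : Set X, IsCompact K → IsConnected K → K ⊆ Aᶜ → x ∈ K → interior K = ∅}

open Set

section Continuum

variable {X : Type*} [TopologicalSpace X]

def IsSubcontinuumDecomposition (A B : Set X) : Prop :=
  A.Nonempty ∧ IsCompact A ∧ IsConnected A ∧ A ≠ univ ∧
    B.Nonempty ∧ IsCompact B ∧ IsConnected B ∧ B ≠ univ ∧ A ∪ B = univ

lemma IsSubcontinuumDecomposition.of_isClosed [CompactSpace X] {A B : Set X}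
    (hA : IsClosed A) (hAconn : IsConnected A) (hAne : A ≠ univ)
    (hB : IsClosed B) (hBconn : IsConnected B) (hBne : B ≠ univ) (hAB : A ∪ B = univ) :
    IsSubcontinuumDecomposition A B :=
  ⟨hAconn.nonempty, hA.isCompact, hAconn, hAne, hBconn.nonempty, hB.isCompact, hBconn, hBne, hAB⟩

/-- If `K ⊆ u` in a separation `F ⊆ u ∪ v`, then `F ∩ v = (F \ K) \ u` is clopen, hence trivial. -/
lemma IsPreconnected.of_isClosed_of_isOpen_diff [PreconnectedSpace X] {K F : Set X}
    (hK : IsPreconnected K) (hKF : K ⊆ F) (hF : IsClosed F) (hFK : IsOpen (F \ K)) :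
    IsPreconnected F := by
  rw [isPreconnected_iff_subset_of_fully_disjoint_closed hF]
  intro u v hu hv hFuv huv
  wlog hKu : K ⊆ u generalizing u v
  · have hKuv := isPreconnected_iff_subset_of_disjoint_closed.mp hK u v hu hv (hKF.trans hFuv)
      (by rw [huv.inter_eq, inter_empty])
    exact (this v u hv hu (union_comm u v ▸ hFuv) huv.symm (hKuv.resolve_left hKu)).symm
  have hFv : F ∩ v = (F \ K) ∩ uᶜ := by
    ext x
    have := @hFuv x
    have := @hKu x
    have := huv.notMem_of_mem_right (a := x)
    simp only [mem_inter_iff, mem_sdiff, mem_compl_iff, mem_union] at *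
    tauto
  have hclopen : IsClopen (F ∩ v) := ⟨hF.inter hv, hFv ▸ hFK.inter hu.isOpen_compl⟩
  rcases isClopen_iff.mp hclopen with h | h
  · exact Or.inl fun x hx => (hFuv hx).resolve_right fun hxv => h.subset ⟨hx, hxv⟩
  · exact Or.inr fun x _ => (h.symm ▸ mem_univ x : x ∈ F ∩ v).2

lemma IsPreconnected.compl_compl_inter_of_separation [PreconnectedSpace X] {K u v : Set X}
    (hK : IsPreconnected K) (hKcl : IsClosed K) (hu : IsOpen u) (hv : IsOpen v)
    (hcover : Kᶜ ⊆ u ∪ v) (hdisj : Kᶜ ∩ (u ∩ v) = ∅) :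
    IsPreconnected (Kᶜ ∩ v)ᶜ := by
  refine hK.of_isClosed_of_isOpen_diff (fun x hx h => h.1 hx)
    (hKcl.isOpen_compl.inter hv).isClosed_compl ?_
  have hdiff : (Kᶜ ∩ v)ᶜ \ K = Kᶜ ∩ u := by
    ext x
    have := @hcover x
    have : x ∉ Kᶜ ∩ (u ∩ v) := hdisj ▸ notMem_empty x
    simp only [mem_inter_iff, mem_sdiff, mem_compl_iff, mem_union] at *
    tauto
  exact hdiff ▸ hKcl.isOpen_compl.inter hu

lemma exists_isSubcontinuumDecomposition_of_interior_nonempty [CompactSpace X]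
    [ConnectedSpace X] {K : Set X} (hKcl : IsClosed K) (hK : IsConnected K) (hKne : K ≠ univ)
    (hint : (interior K).Nonempty) :
    ∃ A B : Set X, IsSubcontinuumDecomposition A B := by
  by_cases hconn : IsPreconnected Kᶜ
  · have hcompl : Kᶜ.Nonempty := nonempty_compl.mpr hKne
    refine ⟨K, closure Kᶜ, .of_isClosed hKcl hK hKne isClosed_closure
      ⟨hcompl.closure, hconn.closure⟩ ?_ ?_⟩
    · rw [closure_compl, Ne, compl_univ_iff]
      exact hint.ne_empty
    · exact univ_subset_iff.mp (union_compl_self K ▸ union_subset_union_right K subset_closure)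
  · obtain ⟨u, v, hu, hv, hcover, ⟨p, hpK, hpu⟩, ⟨q, hqK, hqv⟩, hdisj⟩ :
        ∃ u v, _ := by simpa only [IsPreconnected, not_forall, not_not, exists_prop] using hconn
    rw [not_nonempty_iff_eq_empty] at hdisj
    have hKsub {w : Set X} : K ⊆ (Kᶜ ∩ w)ᶜ := fun x hx h => h.1 hx
    have hA : IsConnected (Kᶜ ∩ v)ᶜ := ⟨hK.nonempty.mono hKsub,
      hK.isPreconnected.compl_compl_inter_of_separation hKcl hu hv hcover hdisj⟩
    have hB : IsConnected (Kᶜ ∩ u)ᶜ := ⟨hK.nonempty.mono hKsub,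
      hK.isPreconnected.compl_compl_inter_of_separation hKcl hv hu (union_comm u v ▸ hcover)
        (inter_comm u v ▸ hdisj)⟩
    refine ⟨_, _, .of_isClosed (hKcl.isOpen_compl.inter hv).isClosed_compl hA ?_
      (hKcl.isOpen_compl.inter hu).isClosed_compl hB ?_ ?_⟩
    · exact (ne_univ_iff_exists_notMem _).mpr ⟨q, not_not.mpr ⟨hqK, hqv⟩⟩
    · exact (ne_univ_iff_exists_notMem _).mpr ⟨p, not_not.mpr ⟨hpK, hpu⟩⟩
    rw [← compl_inter, compl_univ_iff, inter_inter_inter_comm, inter_self, inter_comm v, hdisj]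
end Continuum


theorem stmt_5_general {X : Type*} [MetricSpace X] [CompactSpace X] [ConnectedSpace X]
    (hindec : ¬ ∃ A B : Set X, A.Nonempty ∧ IsCompact A ∧ IsConnected A ∧ A ≠ Set.univ ∧
      B.Nonempty ∧ IsCompact B ∧ IsConnected B ∧ B ≠ Set.univ ∧ A ∪ B = Set.univ) :
    ∀ A : Set X, A.Nonempty → JonesT A = Set.univ := by
  rintro A ⟨a, ha⟩
  refine eq_univ_of_forall fun x K hK hKconn hKA _ => ?_
  by_contra hint
  have hKne : K ≠ univ := (ne_univ_iff_exists_notMem K).mpr ⟨a, fun haK => hKA haK ha⟩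
  exact hindec <| exists_isSubcontinuumDecomposition_of_interior_nonempty hK.isClosed hKconn hKne
    (nonempty_iff_ne_empty.mpr hint)

/-- If X is an indecomposable continuum then T(A) = X for every nonempty A ⊆ X. -/
theorem stmt_5 {X : Type*} [MetricSpace X] [CompactSpace X] [ConnectedSpace X]
    [Nonempty X]
    (hindec : ¬ ∃ A B : Set X, A.Nonempty ∧ IsCompact A ∧ IsConnected A ∧ A ≠ Set.univ ∧
      B.Nonempty ∧ IsCompact B ∧ IsConnected B ∧ B ≠ Set.univ ∧ A ∪ B = Set.univ) :
    ∀ A : Set X, A.Nonempty → JonesT A = Set.univ :=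
  stmt_5_general hindec
end

section
/- Let R : X → X be a continuous, open, surjective map of a compact metric space X such that preimages of points are finite and preimages of continua have finitely many components, each mapping onto the image (confluence). If A ⊆ X satisfies T(A) = A, then T(R⁻¹(A)) = R⁻¹(A), where T(B) = { x ∈ X : every subcontinuum of X \ B containing x has empty interior in X }. -/
open Set

section Topology

variable {X Y : Type*} [TopologicalSpace X] [TopologicalSpace Y]

theorem subset_jonesT (A : Set X) : A ⊆ JonesT A :=
  fun _ hx _ _ _ hK hxK => absurd hx (hK hxK)

theorem IsClosed.isClosed_connectedComponentIn {s : Set X} (hs : IsClosed s) (x : X) :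
    IsClosed (connectedComponentIn s x) := by
  by_cases hx : x ∈ s
  · refine isClosed_of_closure_subset ?_
    exact isPreconnected_connectedComponentIn.closure.subset_connectedComponentIn
      (subset_closure (mem_connectedComponentIn hx))
      (closure_minimal (connectedComponentIn_subset s x) hs)
  · rw [connectedComponentIn_eq_empty hx]
    exact isClosed_empty

theorem IsClosed.exists_isOpen_inter_eq_connectedComponentIn {s : Set X} (hs : IsClosed s)
    (hfin : {C : Set X | ∃ y ∈ s, C = connectedComponentIn s y}.Finite) (x : X) :
    ∃ V, IsOpen V ∧ V ∩ s = connectedComponentIn s x := by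
  set others := {C : Set X | ∃ y ∈ s, C = connectedComponentIn s y} \ {connectedComponentIn s x}
  have hclosed : IsClosed (⋃₀ others) := by
    rw [sUnion_eq_biUnion]
    refine (hfin.subset sdiff_subset).isClosed_biUnion ?_
    rintro _ ⟨⟨y, -, rfl⟩, -⟩
    exact hs.isClosed_connectedComponentIn y
  refine ⟨(⋃₀ others)ᶜ, hclosed.isOpen_compl, Subset.antisymm ?_ ?_⟩
  · rintro z ⟨hz, hzs⟩
    by_contra hzx
    refine hz ⟨connectedComponentIn s z, ⟨⟨z, hzs, rfl⟩, ?_⟩, mem_connectedComponentIn hzs⟩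
    rintro (h : connectedComponentIn s z = connectedComponentIn s x)
    exact hzx (h ▸ mem_connectedComponentIn hzs)
  · intro z hzx
    refine ⟨?_, connectedComponentIn_subset s x hzx⟩
    rintro ⟨_, ⟨⟨y, -, rfl⟩, hne⟩, hzy⟩
    exact hne (by rw [connectedComponentIn_eq hzy, ← connectedComponentIn_eq hzx]; rfl)

theorem interior_connectedComponentIn_preimage_nonempty {f : X → Y} (hf : Continuous f)
    {Q : Set Y} (hQ : IsClosed Q)
    (hfin : {C : Set X | ∃ y ∈ f ⁻¹' Q, C = connectedComponentIn (f ⁻¹' Q) y}.Finite) {x : X}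
    (himage : f '' connectedComponentIn (f ⁻¹' Q) x = Q) (hint : (interior Q).Nonempty) :
    (interior (connectedComponentIn (f ⁻¹' Q) x)).Nonempty := by
  obtain ⟨V, hV, hVC⟩ := (hQ.preimage hf).exists_isOpen_inter_eq_connectedComponentIn hfin x
  obtain ⟨v, hv⟩ := hint
  obtain ⟨c, hcC, rfl⟩ : v ∈ f '' connectedComponentIn (f ⁻¹' Q) x :=
    himage.symm ▸ interior_subset hv
  have hcV : c ∈ V := (hVC.symm.subset hcC).1
  refine ⟨c, mem_interior.mpr ⟨V ∩ f ⁻¹' interior Q, ?_, ?_, hcV, hv⟩⟩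
  · exact hVC ▸ inter_subset_inter_right V (preimage_mono interior_subset)
  · exact hV.inter (isOpen_interior.preimage hf)

theorem jonesT_preimage_subset_preimage_jonesT [CompactSpace X] [T2Space Y] {f : X → Y}
    (hf : Continuous f)
    (hconf : ∀ Q : Set Y, Q.Nonempty → IsCompact Q → IsConnected Q →
      (∀ x ∈ f ⁻¹' Q, f '' connectedComponentIn (f ⁻¹' Q) x = Q) ∧
      {C : Set X | ∃ x ∈ f ⁻¹' Q, C = connectedComponentIn (f ⁻¹' Q) x}.Finite)
    (A : Set Y) : JonesT (f ⁻¹' A) ⊆ f ⁻¹' JonesT A := by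
  intro x hx Q hQc hQconn hQA hxQ
  rw [← not_nonempty_iff_eq_empty]
  intro hint
  obtain ⟨himage, hfin⟩ := hconf Q ⟨f x, hxQ⟩ hQc hQconn
  have hxQ' : x ∈ f ⁻¹' Q := hxQ
  have hC := interior_connectedComponentIn_preimage_nonempty hf hQc.isClosed hfin
    (himage x hxQ') hint
  refine hC.ne_empty (hx _ ?_ (isConnected_connectedComponentIn_iff.mpr hxQ') ?_
    (mem_connectedComponentIn hxQ'))
  · exact ((hQc.isClosed.preimage hf).isClosed_connectedComponentIn x).isCompact
  · exact fun z hz => hQA (connectedComponentIn_subset _ x hz)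

end Topology

theorem stmt_8_general {X : Type*} [MetricSpace X] [CompactSpace X]
    (R : X → X) (hc : Continuous R)
    (hconf : ∀ Q : Set X, Q.Nonempty → IsCompact Q → IsConnected Q →
      (∀ x ∈ R ⁻¹' Q, R '' connectedComponentIn (R ⁻¹' Q) x = Q) ∧
      {C : Set X | ∃ x ∈ R ⁻¹' Q, C = connectedComponentIn (R ⁻¹' Q) x}.Finite)
    (A : Set X) (hT : JonesT A = A) :
    JonesT (R ⁻¹' A) = R ⁻¹' A := by
  refine Subset.antisymm ?_ (subset_jonesT _)
  simpa only [hT] using jonesT_preimage_subset_preimage_jonesT hc hconf A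

/-- If R is a continuous open surjection of a continuum with finite fibers,
confluent (each component of the preimage of a continuum maps onto it, and there
are finitely many such components), then the preimage of a T-closed set is T-closed. -/
theorem stmt_8 {X : Type*} [MetricSpace X] [CompactSpace X] [ConnectedSpace X]
    [Nonempty X] (R : X → X) (hc : Continuous R) (ho : IsOpenMap R)
    (hs : Function.Surjective R)
    (hfib : ∀ y : X, (R ⁻¹' {y}).Finite)
    (hconf : ∀ Q : Set X, Q.Nonempty → IsCompact Q → IsConnected Q →
      (∀ x ∈ R ⁻¹' Q, R '' connectedComponentIn (R ⁻¹' Q) x = Q) ∧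
      {C : Set X | ∃ x ∈ R ⁻¹' Q, C = connectedComponentIn (R ⁻¹' Q) x}.Finite)
    (A : Set X) (hT : JonesT A = A) :
    JonesT (R ⁻¹' A) = R ⁻¹' A :=
  stmt_8_general R hc hconf A hT
end

section
/- Let X be a continuum and m : X → Y a monotone quotient map onto a finite tree Y such that every fiber m⁻¹(y) has empty interior in X. Let R : X → X be continuous and open, mapping each fiber of m onto a fiber of m. Then the induced map g : Y → Y with g ∘ m = m ∘ R is well-defined, continuous, and open. -/
open Set Topology

section FiberRespecting

variable {X X' Y Y' : Type*} {p : X → Y} {q : X' → Y'} {f : X → X'} {g : Y → Y'}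

theorem comp_eq_of_image_preimage_singleton
    (hfg : ∀ y, f '' (p ⁻¹' {y}) = q ⁻¹' {g y}) : g ∘ p = q ∘ f := by
  funext x
  have hx : f x ∈ q ⁻¹' {g (p x)} := hfg (p x) ▸ mem_image_of_mem f rfl
  exact hx.symm

theorem preimage_image_eq_of_image_preimage_singleton
    (hfg : ∀ y, f '' (p ⁻¹' {y}) = q ⁻¹' {g y}) (s : Set Y) :
    q ⁻¹' (g '' s) = f '' (p ⁻¹' s) := by
  rw [← biUnion_of_singleton s, image_iUnion₂, preimage_iUnion₂, preimage_iUnion₂, image_iUnion₂]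
  simp only [image_singleton, hfg]

theorem isOpenMap_of_image_preimage_singleton [TopologicalSpace X] [TopologicalSpace X']
    [TopologicalSpace Y] [TopologicalSpace Y'] (hp : Continuous p) (hq : IsQuotientMap q)
    (hf : IsOpenMap f) (hfg : ∀ y, f '' (p ⁻¹' {y}) = q ⁻¹' {g y}) : IsOpenMap g := by
  intro U hU
  rw [← hq.isOpen_preimage, preimage_image_eq_of_image_preimage_singleton hfg]
  exact hf _ (hU.preimage hp)

end FiberRespecting

theorem stmt_11_general {X Y : Type*} [MetricSpace X] [MetricSpace Y]
    (m : X → Y) (hm : Topology.IsQuotientMap m)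
    (R : X → X) (hRc : Continuous R) (hRo : IsOpenMap R)
    (hfib : ∀ y : Y, ∃ y' : Y, R '' (m ⁻¹' {y}) = m ⁻¹' {y'}) :
    ∃ g : Y → Y, Continuous g ∧ IsOpenMap g ∧ g ∘ m = m ∘ R := by
  choose g hg using hfib
  have hcomp : g ∘ m = m ∘ R := comp_eq_of_image_preimage_singleton hg
  refine ⟨g, ?_, isOpenMap_of_image_preimage_singleton hm.continuous hm hRo hg, hcomp⟩
  rw [hm.continuous_iff, hcomp]
  exact hm.continuous.comp hRc

/-- Let X be a continuum, m a monotone quotient map onto a finite tree Y with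
nowhere dense fibers, and R continuous open on X mapping fibers onto fibers.
Then the induced map g with g ∘ m = m ∘ R is well-defined, continuous and open. -/
theorem stmt_11 {X Y : Type*} [MetricSpace X] [CompactSpace X] [ConnectedSpace X]
    [Nonempty X] [MetricSpace Y] [CompactSpace Y] [ConnectedSpace Y]
    [Nonempty Y] [LocallyConnectedSpace Y]
    (hnoscc : ∀ S : Set Y, ¬ Nonempty (AddCircle (1 : ℝ) ≃ₜ S))
    (hend_fin : {y : Y | IsPreconnected ({y}ᶜ : Set Y)}.Finite)
    (m : X → Y) (hm : Topology.IsQuotientMap m) (hmono : ∀ y : Y, IsConnected (m ⁻¹' {y}))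
    (hnd : ∀ y : Y, interior (m ⁻¹' {y}) = ∅)
    (R : X → X) (hRc : Continuous R) (hRo : IsOpenMap R) (hRs : Function.Surjective R)
    (hfib : ∀ y : Y, ∃ y' : Y, R '' (m ⁻¹' {y}) = m ⁻¹' {y'}) :
    ∃ g : Y → Y, Continuous g ∧ IsOpenMap g ∧ g ∘ m = m ∘ R :=
  stmt_11_general m hm R hRc hRo hfib
end

section
/- Let X be a compact metric space, R : X → X a continuous surjection such that every point has at most d preimages, and m : X → Y a quotient map with connected fibers semiconjugating R to g : Y → Y (g ∘ m = m ∘ R), such that the image under R of each fiber of m is a fiber of m. Then every point of Y has at most d preimages under g. -/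
/-! Fix `x₀ ∈ m⁻¹{y}`. If `g z = y`, then `R` maps the fiber `m⁻¹{z}` onto `m⁻¹{y} ∋ x₀`, so `z`
is the `m`-image of some `R`-preimage of `x₀`. Hence `g⁻¹{y} ⊆ m '' R⁻¹{x₀}`, which has at most
`d` points. -/

theorem Set.Finite.ncard_le_of_subset_image {α β : Type*} {s : Set β} {t : Set α} {f : α → β}
    {d : ℕ} (ht : t.Finite) (htd : t.ncard ≤ d) (hst : s ⊆ f '' t) :
    s.Finite ∧ s.ncard ≤ d :=
  ⟨(ht.image f).subset hst,
    calc s.ncard ≤ (f '' t).ncard := Set.ncard_le_ncard hst (ht.image f)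
      _ ≤ t.ncard := Set.ncard_image_le ht
      _ ≤ d := htd⟩

theorem preimage_singleton_subset_image_preimage_of_fiber_subset {X Y : Type*} {m : X → Y}
    {R : X → X} {g : Y → Y} (hfib : ∀ y, m ⁻¹' {g y} ⊆ R '' (m ⁻¹' {y})) {x₀ : X} :
    g ⁻¹' {m x₀} ⊆ m '' (R ⁻¹' {x₀}) := by
  intro z hz
  obtain ⟨x, hxz, hRx⟩ := hfib z (show m x₀ = g z from hz.symm)
  exact ⟨x, hRx, hxz⟩

theorem stmt_13_general {X Y : Type*} (d : ℕ) (m : X → Y)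
    (hms : Function.Surjective m)
    (R : X → X)
    (hRd : ∀ x : X, (R ⁻¹' {x}).Finite ∧ (R ⁻¹' {x}).ncard ≤ d)
    (g : Y → Y)
    (hfib : ∀ y : Y, R '' (m ⁻¹' {y}) = m ⁻¹' {g y}) :
    ∀ y : Y, (g ⁻¹' {y}).Finite ∧ (g ⁻¹' {y}).ncard ≤ d := by
  intro y
  obtain ⟨x₀, rfl⟩ := hms y
  exact (hRd x₀).1.ncard_le_of_subset_image (hRd x₀).2
    (preimage_singleton_subset_image_preimage_of_fiber_subset fun y ↦ (hfib y).superset)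

/-- If R has fibers of cardinality at most d and m semiconjugates R to g with
connected fibers, the image under R of each fiber of m being a fiber of m,
then g has fibers of cardinality at most d. -/
theorem stmt_13 {X Y : Type*} [MetricSpace X] [CompactSpace X] [MetricSpace Y]
    [CompactSpace Y] (d : ℕ) (m : X → Y) (hmc : Continuous m)
    (hms : Function.Surjective m) (hmono : ∀ y : Y, IsConnected (m ⁻¹' {y}))
    (R : X → X) (hRc : Continuous R)
    (hRd : ∀ x : X, (R ⁻¹' {x}).Finite ∧ (R ⁻¹' {x}).ncard ≤ d)
    (g : Y → Y) (hgc : Continuous g) (hsemi : g ∘ m = m ∘ R)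
    (hfib : ∀ y : Y, R '' (m ⁻¹' {y}) = m ⁻¹' {g y}) :
    ∀ y : Y, (g ⁻¹' {y}).Finite ∧ (g ⁻¹' {y}).ncard ≤ d :=
  stmt_13_general d m hms R hRd g hfib
end

section
/- If X is a continuum and f : X → X is a homeomorphism onto its image that is forward expanding on an invariant subcontinuum K (there exist λ > 1 and ε > 0 with d(f(x), f(y)) ≥ λ·d(x,y) for all x, y ∈ K with d(x,y) < ε) and f(K) = K, then K is a single point. -/
/-!
An injective continuous map that expands distances on small scales of a compact forward-invariant
set `K` is, on `K`, inverted by a map contracting by `λ⁻¹` on some scale `δ`. Covering `K` by `m`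
balls of radius `δ / 2`, any two points of `K` whose `n`-th images share a ball are within
`δ / λ ^ n` of each other, so by pigeonhole `K` has at most `m` points. A finite connected set in a
metric space is a point.
-/

open Set Filter

theorem IsCompact.exists_pos_dist_lt_of_dist_image_lt {X Y : Type*} [PseudoMetricSpace X]
    [MetricSpace Y] {f : X → Y} {K : Set X} (hK : IsCompact K) (hf : ContinuousOn f K)
    (hinj : InjOn f K) {ε : ℝ} (hε : 0 < ε) :
    ∃ δ > 0, ∀ x ∈ K, ∀ y ∈ K, dist (f x) (f y) < δ → dist x y < ε := by
  set S := K ×ˢ K ∩ {p : X × X | ε ≤ dist p.1 p.2}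
  have hS : IsCompact S :=
    (hK.prod hK).inter_right (isClosed_le continuous_const continuous_dist)
  have hS₁ : MapsTo Prod.fst S K := fun _ hp => hp.1.1
  have hS₂ : MapsTo Prod.snd S K := fun _ hp => hp.1.2
  have hfS : ContinuousOn (fun p : X × X => dist (f p.1) (f p.2)) S :=
    continuous_dist.comp_continuousOn
      ((hf.comp continuousOn_fst hS₁).prodMk (hf.comp continuousOn_snd hS₂))
  have hpos : ∀ p ∈ S, 0 < dist (f p.1) (f p.2) := by
    rintro ⟨x, y⟩ ⟨⟨hx, hy⟩, hxy : ε ≤ dist x y⟩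
    refine dist_pos.2 fun h => hxy.not_gt ?_
    rwa [show x = y from hinj hx hy h, dist_self]
  obtain ⟨δ, hδ, hδS⟩ := hS.exists_forall_le' hfS hpos
  refine ⟨δ, hδ, fun x hx y hy h => ?_⟩
  by_contra! hxy
  exact (hδS (x, y) ⟨⟨hx, hy⟩, hxy⟩).not_gt h

theorem pow_mul_dist_le_dist_iterate {X : Type*} [PseudoMetricSpace X] {f : X → X} {K : Set X}
    (hmaps : MapsTo f K K) {lam δ : ℝ} (hlam : 1 ≤ lam)
    (hexp : ∀ x ∈ K, ∀ y ∈ K, dist (f x) (f y) < δ → lam * dist x y ≤ dist (f x) (f y))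
    (n : ℕ) {x y : X} (hx : x ∈ K) (hy : y ∈ K) (h : dist (f^[n] x) (f^[n] y) < δ) :
    lam ^ n * dist x y ≤ dist (f^[n] x) (f^[n] y) := by
  induction n generalizing x y with
  | zero => simp
  | succ n ih =>
    rw [Function.iterate_succ_apply, Function.iterate_succ_apply] at h ⊢
    have hn := ih (hmaps hx) (hmaps hy) h
    have hfxy : dist (f x) (f y) < δ :=
      (le_mul_of_one_le_left dist_nonneg (one_le_pow₀ hlam)).trans hn |>.trans_lt h
    calc lam ^ (n + 1) * dist x y = lam ^ n * (lam * dist x y) := by ring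
      _ ≤ lam ^ n * dist (f x) (f y) := by
        gcongr
        exact hexp x hx y hy hfxy
      _ ≤ _ := hn

theorem IsCompact.finite_of_injOn_of_expanding {X : Type*} [MetricSpace X] {f : X → X}
    {K : Set X} (hK : IsCompact K) (hf : ContinuousOn f K) (hinj : InjOn f K)
    (hmaps : MapsTo f K K) {lam ε : ℝ} (hlam : 1 < lam) (hε : 0 < ε)
    (hexp : ∀ x ∈ K, ∀ y ∈ K, dist x y < ε → lam * dist x y ≤ dist (f x) (f y)) :
    K.Finite := by
  obtain ⟨δ, hδ, hδε⟩ := hK.exists_pos_dist_lt_of_dist_image_lt hf hinj hε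
  have hpow := pow_mul_dist_le_dist_iterate hmaps hlam.le
    fun x hx y hy h => hexp x hx y hy (hδε x hx y hy h)
  obtain ⟨t, -, hcover⟩ := hK.elim_nhds_subcover _ fun x _ => Metric.ball_mem_nhds x (half_pos hδ)
  have hcenter : ∀ z ∈ K, ∃ c ∈ t, z ∈ Metric.ball c (δ / 2) := fun z hz => by
    simpa only [mem_iUnion₂, exists_prop] using hcover hz
  choose! c hct hzc using hcenter
  by_contra hinf
  obtain ⟨s, hsK, hs⟩ := Set.Infinite.exists_subset_card_eq hinf (t.card + 1)
  have hsep : ∀ᶠ n in atTop, ∀ x ∈ s, ∀ y ∈ s, x ≠ y → δ ≤ lam ^ n * dist x y := by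
    simp only [eventually_all_finset]
    intro x _ y _
    by_cases hxy : x = y
    · exact .of_forall fun _ h => absurd hxy h
    · exact ((tendsto_pow_atTop_atTop_of_one_lt hlam).atTop_mul_const
        (dist_pos.2 hxy)).eventually_ge_atTop δ |>.mono fun _ h _ => h
  obtain ⟨n, hn⟩ := hsep.exists
  have hmapsn : MapsTo (fun x => c (f^[n] x)) s t := fun x hx =>
    hct _ (hmaps.iterate n (hsK hx))
  obtain ⟨x, hx, y, hy, hxy, hcxy⟩ :=
    Finset.exists_ne_map_eq_of_card_lt_of_maps_to (by omega) hmapsn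
  have hnear : dist (f^[n] x) (f^[n] y) < δ := by
    have hx' := hzc _ (hmaps.iterate n (hsK hx))
    have hy' := hzc _ (hmaps.iterate n (hsK hy))
    rw [Metric.mem_ball] at hx' hy'
    rw [← hcxy] at hy'
    linarith [dist_triangle_right (f^[n] x) (f^[n] y) (c (f^[n] x))]
  exact (hn x hx y hy hxy).not_gt ((hpow n (hsK hx) (hsK hy) hnear).trans_lt hnear)

theorem stmt_18_general {X : Type*} [MetricSpace X] (f : X → X) (hf : Topology.IsEmbedding f)
    (K : Set X) (hKcomp : IsCompact K) (hKconn : IsConnected K)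
    (hKinv : f '' K = K)
    (lam eps : ℝ) (hlam : 1 < lam) (heps : 0 < eps)
    (hexp : ∀ x ∈ K, ∀ y ∈ K, dist x y < eps → lam * dist x y ≤ dist (f x) (f y)) :
    K.Subsingleton := by
  have hfin : K.Finite := hKcomp.finite_of_injOn_of_expanding hf.continuous.continuousOn
    hf.injective.injOn (mapsTo_iff_image_subset.2 hKinv.subset) hlam heps hexp
  exact hfin.countable.isTotallyDisconnected K subset_rfl hKconn.isPreconnected

/-- If f is a homeomorphism onto its image which is forward expanding on an invariant
subcontinuum K with f(K) = K, then K is a single point. -/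
theorem stmt_18 {X : Type*} [MetricSpace X] [CompactSpace X] [ConnectedSpace X]
    [Nonempty X] (f : X → X) (hf : Topology.IsEmbedding f)
    (K : Set X) (hKne : K.Nonempty) (hKcomp : IsCompact K) (hKconn : IsConnected K)
    (hKinv : f '' K = K)
    (lam eps : ℝ) (hlam : 1 < lam) (heps : 0 < eps)
    (hexp : ∀ x ∈ K, ∀ y ∈ K, dist x y < eps → lam * dist x y ≤ dist (f x) (f y)) :
    K.Subsingleton :=
  stmt_18_general f hf K hKcomp hKconn hKinv lam eps hlam heps hexp
end
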